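/- For every integer D ≥ 2, there exists ε > 0 such that for all complex numbers g_1, …, g_D with |g_i| < ε for each i, and for every integer n ≥ 0, F_{n+1}(g_1,…,g_D) = F_n(g_1,…,g_D) + ∑_{k=1}^{D} (∑_{1 ≤ i_1 < ⋯ < i_k ≤ D} g_{i_1} ⋯ g_{i_k}) F_{n+k}(g_1,…,g_D), where F_m(g_1,…,g_D) = ∑_{(p_1,…,p_D) ∈ ℕ^D} C^m_{p_1…p_D} ∏_i g_i^{p_i}. -/

import Mathlib

/-- The complex number `Cᵐ_{p₁…p_D}`: for `m ≥ 1` this is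
`(m/(p₁+⋯+p_D+m)) · ∏_j binom(p₁+⋯+p_D+m, p_j)`; for `m = 0` it is `1` if all
`p_i = 0` and `0` otherwise. -/
noncomputable def Ccoef (D m : ℕ) (p : Fin D → ℕ) : ℂ :=
  if m = 0 then (if ∀ i, p i = 0 then 1 else 0)
  else (m : ℂ) / ((∑ i, p i : ℕ) + m) * ∏ j, ((∑ i, p i + m).choose (p j) : ℂ)

/-- `F D m g = ∑_{(p₁,…,p_D) ∈ ℕ^D} Cᵐ_{p₁…p_D} ∏_i g_iᵖⁱ`. -/
noncomputable def F (D m : ℕ) (g : Fin D → ℂ) : ℂ :=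
  ∑' p : Fin D → ℕ, Ccoef D m p * ∏ i, g i ^ p i

/-!
The recursion is an identity between coefficients. Fix `q` and put `N = |q| + n`,
`x_j = q_j / (N + 1)`. Then `binom(N, q_j) = (1 - x_j) binom(N + 1, q_j)` and
`binom(N, q_j - 1) = x_j binom(N + 1, q_j)`, so for every `S ⊆ {1, …, D}` with `1_S ≤ q`
`C^{n+|S|}_{q - 1_S} = (n + |S|)/N · ∏_j binom(N + 1, q_j) · w_S`, where
`w_S = ∏_{j ∈ S} x_j ∏_{j ∉ S} (1 - x_j)` is the probability that independent Bernoulli(`x_j`)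
trials succeed exactly on `S` (and vanishes unless `1_S ≤ q`). The `w_S` sum to `1` and `|S|`
has mean `∑ x_j = |q|/(N + 1)`, which gives `C^{n+1}_q = ∑_{1_S ≤ q} C^{n+|S|}_{q - 1_S}`.

Since `|C^m_p| ≤ 2^{D(|p| + m)}`, all series converge absolutely for `|g_i| < 2^{-D}`. Summing the
coefficient identity against `g^q`, the shift `q ↦ q - 1_S` becomes multiplication by
`∏_{i ∈ S} g_i`, and grouping the sets `S` by size produces the elementary symmetric polynomials.
-/

open Finset

section Binomial

variable {K : Type*} [Field K] [CharZero K]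

theorem Nat.cast_choose_eq_succ_sub_div_mul (N k : ℕ) :
    (N.choose k : K) = (N + 1 - k) / (N + 1) * (N + 1).choose k := by
  rcases le_or_gt k (N + 1) with hk | hk
  · have h := congrArg (Nat.cast (R := K)) (Nat.choose_mul_succ_eq N k)
    push_cast [hk] at h
    field_simp
    linear_combination h
  · simp [Nat.choose_eq_zero_of_lt hk, Nat.choose_eq_zero_of_lt (Nat.lt_of_succ_lt hk)]

theorem Nat.cast_choose_eq_succ_div_mul (N k : ℕ) :
    (N.choose k : K) = (k + 1) / (N + 1) * (N + 1).choose (k + 1) := by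
  have h := congrArg (Nat.cast (R := K)) (Nat.add_one_mul_choose_eq N k)
  push_cast at h
  field_simp
  linear_combination h

end Binomial

section Bernoulli

variable {ι R : Type*} [CommRing R] [DecidableEq ι]

def bernoulliWeight (s : Finset ι) (x : ι → R) (S : Finset ι) : R :=
  (∏ i ∈ S, x i) * ∏ i ∈ s \ S, (1 - x i)

theorem prod_ite_eq_bernoulliWeight [Fintype ι] (x : ι → R) (S : Finset ι) :
    ∏ i, (if i ∈ S then x i else 1 - x i) = bernoulliWeight univ x S := by
  rw [prod_ite, bernoulliWeight, filter_mem_eq_inter, univ_inter, filter_not, filter_mem_eq_inter,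
    univ_inter]

variable (s : Finset ι) (x : ι → R)

theorem sum_bernoulliWeight : ∑ S ∈ s.powerset, bernoulliWeight s x S = 1 := by
  simp [bernoulliWeight, ← prod_add]

theorem sum_bernoulliWeight_filter_mem {i : ι} (hi : i ∈ s) :
    ∑ S ∈ s.powerset with i ∈ S, bernoulliWeight s x S = x i := by
  -- killing the factor `1 - x i` discards exactly the sets `S` that miss `i`
  set y := Function.update (fun j => 1 - x j) i 0
  have hy : ∀ S, ∏ j ∈ s \ S, y j = if i ∈ S then ∏ j ∈ s \ S, (1 - x j) else 0 := by
    intro S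
    split_ifs with hiS
    · refine prod_congr rfl fun j hj => Function.update_of_ne ?_ _ _
      rintro rfl
      exact (mem_sdiff.1 hj).2 hiS
    · exact prod_eq_zero (mem_sdiff.2 ⟨hi, hiS⟩) (by simp [y])
  calc ∑ S ∈ s.powerset with i ∈ S, bernoulliWeight s x S
      = ∑ S ∈ s.powerset, (∏ j ∈ S, x j) * ∏ j ∈ s \ S, y j := by
        simp only [sum_filter, hy, mul_ite, mul_zero, bernoulliWeight]
    _ = ∏ j ∈ s, (x j + y j) := (prod_add _ _ _).symm
    _ = x i := by
        rw [prod_eq_single_of_mem i hi fun j _ hji => by simp [y, hji]]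
        simp [y]

theorem sum_card_mul_bernoulliWeight :
    ∑ S ∈ s.powerset, (#S : R) * bernoulliWeight s x S = ∑ i ∈ s, x i := by
  calc ∑ S ∈ s.powerset, (#S : R) * bernoulliWeight s x S
      = ∑ S ∈ s.powerset, ∑ i ∈ s, if i ∈ S then bernoulliWeight s x S else 0 := by
        refine sum_congr rfl fun S hS => ?_
        rw [sum_ite_mem, inter_eq_right.2 (mem_powerset.1 hS), sum_const, nsmul_eq_mul]
    _ = ∑ i ∈ s, x i := by
        rw [sum_comm]
        exact sum_congr rfl fun i hi => by rw [← sum_filter, sum_bernoulliWeight_filter_mem s x hi]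

end Bernoulli

section Shift

variable {ι R : Type*} [DecidableEq ι]

def indicatorOne (S : Finset ι) (i : ι) : ℕ := if i ∈ S then 1 else 0

theorem sum_indicatorOne [Fintype ι] (S : Finset ι) : ∑ i, indicatorOne S i = #S := by
  simp [indicatorOne]

theorem indicatorOne_le_iff {S : Finset ι} {q : ι → ℕ} :
    indicatorOne S ≤ q ↔ ∀ i ∈ S, q i ≠ 0 := by
  simp only [Pi.le_def, indicatorOne]
  refine forall_congr' fun i => ?_
  split_ifs with h <;> simp [h, Nat.one_le_iff_ne_zero]

/-- The coefficients of `(∏ i ∈ S, X i) * ∑ p, f p * X ^ p`. -/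
def shiftBy [Zero R] (S : Finset ι) (f : (ι → ℕ) → R) (q : ι → ℕ) : R :=
  if ∀ i ∈ S, q i ≠ 0 then f (q - indicatorOne S) else 0

theorem hasSum_shiftBy_mul_prod_pow [Fintype ι] [CommSemiring R] [TopologicalSpace R]
    [IsTopologicalSemiring R] {f : (ι → ℕ) → R} {a : R} {g : ι → R}
    (hf : HasSum (fun p => f p * ∏ i, g i ^ p i) a) (S : Finset ι) :
    HasSum (fun q => shiftBy S f q * ∏ i, g i ^ q i) ((∏ i ∈ S, g i) * a) := by
  have hshift : Function.Injective (· + indicatorOne S) := add_left_injective _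
  have hcomp : (fun q => shiftBy S f q * ∏ i, g i ^ q i) ∘ (· + indicatorOne S) =
      fun p => (∏ i ∈ S, g i) * (f p * ∏ i, g i ^ p i) := by
    funext p
    have hne : ∀ i ∈ S, (p + indicatorOne S) i ≠ 0 := by simp +contextual [indicatorOne]
    have hprod : ∏ i, g i ^ (p + indicatorOne S) i = (∏ i ∈ S, g i) * ∏ i, g i ^ p i := by
      simp only [Pi.add_apply, pow_add, prod_mul_distrib, indicatorOne, pow_ite, pow_one,
        pow_zero, prod_ite_mem, univ_inter, mul_comm]
    simp only [Function.comp_apply, shiftBy, if_pos hne, add_tsub_cancel_right, hprod]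
    ring
  rw [← hshift.hasSum_iff, hcomp]
  · exact hf.mul_left _
  · intro q hq
    rw [shiftBy, if_neg, zero_mul]
    exact fun h => hq ⟨q - indicatorOne S, tsub_add_cancel_of_le (indicatorOne_le_iff.2 h)⟩

end Shift

theorem Ccoef_zero_right (D m : ℕ) : Ccoef D m 0 = 1 := by
  rcases eq_or_ne m 0 with rfl | hm
  · simp [Ccoef]
  · simp [Ccoef, hm]

theorem Ccoef_eq_of_ne_zero {D m : ℕ} {p : Fin D → ℕ} (h : ∑ i, p i + m ≠ 0) :
    Ccoef D m p = m / ((∑ i, p i + m : ℕ) : ℂ) * ∏ j, ((∑ i, p i + m).choose (p j) : ℂ) := by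
  rcases eq_or_ne m 0 with rfl | hm
  · have hp : ¬∀ i, p i = 0 := fun hp => h (by simp [hp])
    simp [Ccoef, hp]
  · simp [Ccoef, hm]

theorem shiftBy_Ccoef_eq {D n N : ℕ} {q : Fin D → ℕ} (hN : ∑ i, q i + n = N) (hN0 : N ≠ 0)
    (S : Finset (Fin D)) :
    shiftBy S (Ccoef D (n + #S)) q = (n + #S) / N * (∏ j, ((N + 1).choose (q j) : ℂ)) *
      bernoulliWeight univ (fun j => (q j : ℂ) / (N + 1)) S := by
  have hN1 : (N : ℂ) + 1 ≠ 0 := by exact_mod_cast N.succ_ne_zero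
  rw [shiftBy]
  split_ifs with hS
  · have hsum : ∑ i, (q - indicatorOne S) i + (n + #S) = N := by
      have : ∑ i, (q - indicatorOne S) i + ∑ i, indicatorOne S i = ∑ i, q i := by
        rw [← sum_add_distrib]
        exact sum_congr rfl fun i _ => tsub_add_cancel_of_le (indicatorOne_le_iff.2 hS i)
      rw [← hN, ← sum_indicatorOne S]
      omega
    have hchoose : ∀ j, (N.choose ((q - indicatorOne S) j) : ℂ) =
        (if j ∈ S then (q j : ℂ) / (N + 1) else 1 - (q j : ℂ) / (N + 1)) *
          (N + 1).choose (q j) := by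
      intro j
      simp only [Pi.sub_apply, indicatorOne]
      split_ifs with hj
      · obtain ⟨k, hk⟩ := Nat.exists_eq_succ_of_ne_zero (hS j hj)
        rw [hk, Nat.succ_sub_one, Nat.cast_choose_eq_succ_div_mul]
        push_cast
        ring
      · rw [Nat.sub_zero, Nat.cast_choose_eq_succ_sub_div_mul, one_sub_div hN1]
    rw [Ccoef_eq_of_ne_zero (hsum ▸ hN0), hsum, prod_congr rfl fun j _ => hchoose j,
      prod_mul_distrib, prod_ite_eq_bernoulliWeight]
    generalize bernoulliWeight univ (fun j => (q j : ℂ) / (N + 1)) S = w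
    push_cast
    ring
  · obtain ⟨j, hj, hqj⟩ : ∃ j ∈ S, q j = 0 := by simpa using hS
    have : bernoulliWeight univ (fun j => (q j : ℂ) / (N + 1)) S = 0 :=
      mul_eq_zero_of_left (prod_eq_zero hj (by simp [hqj])) _
    simp [this]

theorem Ccoef_add_one_eq_sum_shiftBy (D n : ℕ) (q : Fin D → ℕ) :
    Ccoef D (n + 1) q = ∑ S ∈ univ.powerset, shiftBy S (Ccoef D (n + #S)) q := by
  by_cases h0 : ∑ i, q i + n = 0
  · obtain ⟨hq, rfl⟩ := Nat.add_eq_zero_iff.1 h0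
    obtain rfl : q = 0 := (Fintype.sum_eq_zero_iff_of_nonneg fun _ => Nat.zero_le _).1 hq
    rw [sum_eq_single_of_mem ∅ (empty_mem_powerset _)]
    · simp [shiftBy, Ccoef_zero_right]
    · intro S _ hS
      obtain ⟨i, hi⟩ := nonempty_iff_ne_empty.2 hS
      rw [shiftBy, if_neg (by simpa using ⟨i, hi⟩)]
  set N := ∑ i, q i + n with hN
  have hN0 : (N : ℂ) ≠ 0 := by exact_mod_cast h0
  have hN1 : (N : ℂ) + 1 ≠ 0 := by exact_mod_cast N.succ_ne_zero
  set x : Fin D → ℂ := fun j => q j / (N + 1)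
  have hx : ∑ j, x j = (N - n) / (N + 1) := by
    simp only [x, ← sum_div, hN]
    push_cast
    ring
  calc Ccoef D (n + 1) q = (n + 1) / (N + 1) * ∏ j, ((N + 1).choose (q j) : ℂ) := by
        rw [Ccoef_eq_of_ne_zero (by omega), ← add_assoc, ← hN]
        push_cast
        ring
    _ = (∏ j, ((N + 1).choose (q j) : ℂ)) / N *
          (n * ∑ S ∈ univ.powerset, bernoulliWeight univ x S +
            ∑ S ∈ univ.powerset, (#S : ℂ) * bernoulliWeight univ x S) := by
        rw [sum_bernoulliWeight, sum_card_mul_bernoulliWeight, hx]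
        field_simp
        ring
    _ = ∑ S ∈ univ.powerset, shiftBy S (Ccoef D (n + #S)) q := by
        rw [mul_sum, ← sum_add_distrib, mul_sum]
        refine sum_congr rfl fun S _ => ?_
        rw [shiftBy_Ccoef_eq hN.symm h0 S]
        generalize bernoulliWeight univ x S = w
        ring

theorem summable_prod_pow {ι : Type*} [Fintype ι] [DecidableEq ι] {r : ι → ℝ}
    (h0 : ∀ i, 0 ≤ r i) (h1 : ∀ i, r i < 1) : Summable fun p : ι → ℕ => ∏ i, r i ^ p i := by
  have hnonneg (p : ι → ℕ) : 0 ≤ ∏ i, r i ^ p i := prod_nonneg fun i _ => pow_nonneg (h0 i) _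
  refine summable_of_sum_le (c := ∏ i, ∑' k, r i ^ k) hnonneg fun s => ?_
  set K := ∑ p ∈ s, ∑ i, p i + 1
  have hs : s ⊆ Fintype.piFinset fun _ => range K := by
    intro p hp
    refine Fintype.mem_piFinset.2 fun i => mem_range.2 (Nat.lt_succ_of_le ?_)
    exact (single_le_sum (fun _ _ => Nat.zero_le _) (mem_univ i)).trans
      (single_le_sum (f := fun p : ι → ℕ => ∑ i, p i) (fun _ _ => Nat.zero_le _) hp)
  calc ∑ p ∈ s, ∏ i, r i ^ p i
      ≤ ∑ p ∈ Fintype.piFinset fun _ => range K, ∏ i, r i ^ p i :=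
        sum_le_sum_of_subset_of_nonneg hs fun p _ _ => hnonneg p
    _ = ∏ i, ∑ k ∈ range K, r i ^ k := (prod_univ_sum _ _).symm
    _ ≤ ∏ i, ∑' k, r i ^ k := prod_le_prod (fun i _ => sum_nonneg fun k _ => pow_nonneg (h0 i) k)
        fun i _ => (summable_geometric_of_lt_one (h0 i) (h1 i)).sum_le_tsum _
          fun k _ => pow_nonneg (h0 i) k

theorem norm_Ccoef_le (D m : ℕ) (p : Fin D → ℕ) : ‖Ccoef D m p‖ ≤ (2 ^ D) ^ (∑ i, p i + m) := by
  rcases eq_or_ne (∑ i, p i + m) 0 with h | h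
  · obtain ⟨hp, rfl⟩ := Nat.add_eq_zero_iff.1 h
    rw [Fintype.sum_eq_zero_iff_of_nonneg (fun i => Nat.zero_le _)] at hp
    simp [hp, Ccoef_zero_right]
  rw [Ccoef_eq_of_ne_zero h, norm_mul, norm_prod, ← pow_mul, mul_comm D, pow_mul]
  have hfrac : ‖(m : ℂ) / ((∑ i, p i + m : ℕ) : ℂ)‖ ≤ 1 := by
    rw [norm_div, Complex.norm_natCast, Complex.norm_natCast]
    exact div_le_one_of_le₀ (by exact_mod_cast Nat.le_add_left m _) (Nat.cast_nonneg _)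
  calc ‖(m : ℂ) / ((∑ i, p i + m : ℕ) : ℂ)‖ * ∏ j, ‖((∑ i, p i + m).choose (p j) : ℂ)‖
      ≤ 1 * ∏ _j : Fin D, (2 : ℝ) ^ (∑ i, p i + m) := by
        gcongr with j
        rw [Complex.norm_natCast]
        exact_mod_cast Nat.choose_le_two_pow _ _
    _ = _ := by rw [one_mul, prod_const, card_univ, Fintype.card_fin]

theorem summable_Ccoef_mul_prod_pow {D : ℕ} {g : Fin D → ℂ} (hg : ∀ i, ‖g i‖ < (2 ^ D)⁻¹)
    (m : ℕ) : Summable fun p : Fin D → ℕ => Ccoef D m p * ∏ i, g i ^ p i := by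
  have hr : ∀ i, 2 ^ D * ‖g i‖ < 1 := fun i => by
    simpa using mul_lt_mul_of_pos_left (hg i) (by positivity : (0 : ℝ) < 2 ^ D)
  refine Summable.of_norm_bounded
    ((summable_prod_pow (fun i => by positivity) hr).mul_left ((2 ^ D) ^ m)) fun p => ?_
  calc ‖Ccoef D m p * ∏ i, g i ^ p i‖ = ‖Ccoef D m p‖ * ∏ i, ‖g i‖ ^ p i := by
        simp [norm_prod, norm_pow]
    _ ≤ (2 ^ D) ^ (∑ i, p i + m) * ∏ i, ‖g i‖ ^ p i := by
        gcongr
        exact norm_Ccoef_le D m p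
    _ = (2 ^ D) ^ m * ∏ i, (2 ^ D * ‖g i‖) ^ p i := by
        rw [pow_add, ← prod_pow_eq_pow_sum, mul_comm _ ((2 ^ D) ^ m), mul_assoc,
          ← prod_mul_distrib]
        simp only [mul_pow]

theorem sum_powerset_prod_mul {ι R : Type*} [CommSemiring R] (s : Finset ι) (g : ι → R)
    (f : ℕ → R) :
    ∑ S ∈ s.powerset, (∏ i ∈ S, g i) * f #S =
      f 0 + ∑ k ∈ Icc 1 #s, (∑ S ∈ powersetCard k s, ∏ i ∈ S, g i) * f k := by
  rw [sum_powerset, sum_range_succ', add_comm, powersetCard_zero, sum_singleton, prod_empty,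
    card_empty, one_mul, ← Ico_add_one_right_eq_Icc, sum_Ico_eq_sum_range, add_tsub_cancel_right]
  refine congrArg _ (sum_congr rfl fun k _ => ?_)
  rw [sum_mul, add_comm 1 k]
  exact sum_congr rfl fun S hS => by rw [(mem_powersetCard.1 hS).2]

theorem Fn_linear_recursion_general (D : ℕ) :
    ∃ ε > 0, ∀ g : Fin D → ℂ, (∀ i, ‖g i‖ < ε) → ∀ n : ℕ,
      F D (n + 1) g = F D n g +
        ∑ k ∈ Finset.Icc 1 D,
          (∑ S ∈ Finset.powersetCard k (Finset.univ : Finset (Fin D)), ∏ i ∈ S, g i) *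
            F D (n + k) g := by
  refine ⟨(2 ^ D)⁻¹, by positivity, fun g hg n => ?_⟩
  have hF m : HasSum (fun p => Ccoef D m p * ∏ i, g i ^ p i) (F D m g) :=
    (summable_Ccoef_mul_prod_pow hg m).hasSum
  have hrec : HasSum (fun q => Ccoef D (n + 1) q * ∏ i, g i ^ q i)
      (∑ S ∈ univ.powerset, (∏ i ∈ S, g i) * F D (n + #S) g) := by
    simp only [Ccoef_add_one_eq_sum_shiftBy, sum_mul]
    exact hasSum_sum fun S _ => hasSum_shiftBy_mul_prod_pow (hF _) S
  rw [(hF (n + 1)).unique hrec, sum_powerset_prod_mul univ g fun k => F D (n + k) g, card_univ,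
    Fintype.card_fin, add_zero]

theorem Fn_linear_recursion (D : ℕ) (hD : 2 ≤ D) :
    ∃ ε > 0, ∀ g : Fin D → ℂ, (∀ i, ‖g i‖ < ε) → ∀ n : ℕ,
      F D (n + 1) g = F D n g +
        ∑ k ∈ Finset.Icc 1 D,
          (∑ S ∈ Finset.powersetCard k (Finset.univ : Finset (Fin D)), ∏ i ∈ S, g i) *
            F D (n + k) g :=
  Fn_linear_recursion_general D
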